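/- arXiv:1001.0559 — 3 statements merged into one kernel-verified Lean document; each statement's English description precedes it below -/
import Mathlib

section
/- (Julia's inequality in the disk) Let f be holomorphic on an open set containing the open unit disk 𝔻 and the point 1, with |f(z)| < 1 for all z ∈ 𝔻, f(1) = 1, and f not constant. Then f'(1) is a positive real number, and for every z ∈ 𝔻: f'(1) · (1 − |f(z)|²)/|1 − f(z)|² ≥ (1 − |z|²)/|1 − z|². -/
open Complex ComplexConjugate Metric Set Filter Topology

/-!
Schwarz–Pick for the pair `z` and `r ∈ (0, 1)` reads
`(1 - r²)(1 - |z|²)/|1 - r z|² ≤ (1 - |f r|²)(1 - |f z|²)/|1 - conj (f r) f z|²`.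
Since `f r = 1 - (1 - r)(f'(1) + o(1))`, the quotient `(1 - |f r|²)/(1 - r²)` tends to `Re f'(1)`
as `r → 1⁻`, so dividing by `1 - r²` and passing to the limit gives Julia's inequality
`(1 - |z|²)/|1 - z|² ≤ Re f'(1) · (1 - |f z|²)/|1 - f z|²`. At `z = 0` it forces `Re f'(1) > 0`;
at `z = r` it says `|(1 - f r)/(1 - r)|² ≤ Re f'(1) · (1 - |f r|²)/(1 - r²)`, whose limit
`|f'(1)|² ≤ (Re f'(1))²` shows that `f'(1)` is real.
-/

noncomputable def diskAut (a z : ℂ) : ℂ := (a - z) / (1 - conj a * z)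

theorem sq_norm_one_sub_conj_mul_sub_sq_norm_sub (a b : ℂ) :
    ‖1 - conj a * b‖ ^ 2 - ‖a - b‖ ^ 2 = (1 - ‖a‖ ^ 2) * (1 - ‖b‖ ^ 2) := by
  simp only [Complex.sq_norm, normSq_apply, sub_re, sub_im, mul_re, mul_im, one_re, one_im,
    conj_re, conj_im]
  ring

theorem one_sub_conj_mul_ne_zero {a b : ℂ} (ha : ‖a‖ < 1) (hb : ‖b‖ ≤ 1) :
    1 - conj a * b ≠ 0 := by
  have : ‖conj a * b‖ < 1 := by
    rw [norm_mul, norm_conj]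
    nlinarith [norm_nonneg a, norm_nonneg b]
  intro h
  rw [← sub_eq_zero.mp h, norm_one] at this
  exact this.false

theorem one_sub_sq_norm_diskAut {a z : ℂ} (h : 1 - conj a * z ≠ 0) :
    1 - ‖diskAut a z‖ ^ 2 = (1 - ‖a‖ ^ 2) * (1 - ‖z‖ ^ 2) / ‖1 - conj a * z‖ ^ 2 := by
  rw [← sq_norm_one_sub_conj_mul_sub_sq_norm_sub, diskAut, norm_div, div_pow, sub_div,
    div_self (by positivity)]

theorem norm_diskAut_lt_one {a z : ℂ} (ha : ‖a‖ < 1) (hz : ‖z‖ < 1) : ‖diskAut a z‖ < 1 := by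
  have hden := one_sub_conj_mul_ne_zero ha hz.le
  have hpos : 0 < 1 - ‖diskAut a z‖ ^ 2 := by
    rw [one_sub_sq_norm_diskAut hden]
    exact div_pos (mul_pos (by nlinarith [norm_nonneg a]) (by nlinarith [norm_nonneg z]))
      (pow_pos (norm_pos_iff.mpr hden) 2)
  nlinarith [norm_nonneg (diskAut a z)]

theorem mapsTo_diskAut {a : ℂ} (ha : ‖a‖ < 1) : MapsTo (diskAut a) (ball 0 1) (ball 0 1) :=
  fun _ hz ↦ mem_ball_zero_iff.mpr <| norm_diskAut_lt_one ha (mem_ball_zero_iff.mp hz)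

theorem differentiableOn_diskAut {a : ℂ} (ha : ‖a‖ < 1) :
    DifferentiableOn ℂ (diskAut a) (ball 0 1) := fun _ hz ↦
  ((differentiableAt_const a).sub differentiableAt_id |>.div
    ((differentiableAt_const 1).sub ((differentiableAt_const _).mul differentiableAt_id))
    (one_sub_conj_mul_ne_zero ha (mem_ball_zero_iff.mp hz).le)).differentiableWithinAt

@[simp] theorem diskAut_self (a : ℂ) : diskAut a a = 0 := by simp [diskAut]

@[simp] theorem diskAut_zero (a : ℂ) : diskAut a 0 = a := by simp [diskAut]

theorem diskAut_diskAut {a z : ℂ} (ha : ‖a‖ < 1) (hz : ‖z‖ ≤ 1) :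
    diskAut a (diskAut a z) = z := by
  have hz' := one_sub_conj_mul_ne_zero ha hz
  have ha' := one_sub_conj_mul_ne_zero ha ha.le
  have hnum : a - (a - z) / (1 - conj a * z) = z * (1 - conj a * a) / (1 - conj a * z) := by
    rw [eq_div_iff hz', sub_mul, div_mul_cancel₀ _ hz']
    ring
  have hden :
      1 - conj a * ((a - z) / (1 - conj a * z)) = (1 - conj a * a) / (1 - conj a * z) := by
    rw [eq_div_iff hz', sub_mul, mul_assoc, div_mul_cancel₀ _ hz']
    ring
  rw [diskAut, diskAut, hnum, hden, div_div_div_cancel_right₀ hz', mul_div_cancel_right₀ _ ha']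

theorem norm_diskAut_le_of_mapsTo_ball {f : ℂ → ℂ} (hf : DifferentiableOn ℂ f (ball 0 1))
    (hmaps : MapsTo f (ball 0 1) (ball 0 1)) {z w : ℂ} (hz : z ∈ ball 0 1) (hw : w ∈ ball 0 1) :
    ‖diskAut (f w) (f z)‖ ≤ ‖diskAut w z‖ := by
  have hw' : ‖w‖ < 1 := mem_ball_zero_iff.mp hw
  have hfw : ‖f w‖ < 1 := mem_ball_zero_iff.mp (hmaps hw)
  set g := diskAut (f w) ∘ f ∘ diskAut w
  have hg : DifferentiableOn ℂ g (ball 0 1) :=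
    (differentiableOn_diskAut hfw).comp
      (hf.comp (differentiableOn_diskAut hw') (mapsTo_diskAut hw'))
      (hmaps.comp (mapsTo_diskAut hw'))
  have hg_maps : MapsTo g (ball 0 1) (closedBall 0 1) :=
    ((mapsTo_diskAut hfw).comp (hmaps.comp (mapsTo_diskAut hw'))).mono_right
      ball_subset_closedBall
  have hg0 : g 0 = 0 := by simp [g]
  have hgz : g (diskAut w z) = diskAut (f w) (f z) := by
    simp [g, diskAut_diskAut hw' (mem_ball_zero_iff.mp hz).le]
  simpa [hgz] using norm_le_norm_of_mapsTo_ball hg hg_maps hg0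
    (norm_diskAut_lt_one hw' (mem_ball_zero_iff.mp hz))

theorem schwarz_pick {f : ℂ → ℂ} (hf : DifferentiableOn ℂ f (ball 0 1))
    (hmaps : MapsTo f (ball 0 1) (ball 0 1)) {z w : ℂ} (hz : z ∈ ball 0 1) (hw : w ∈ ball 0 1) :
    (1 - ‖w‖ ^ 2) * (1 - ‖z‖ ^ 2) / ‖1 - conj w * z‖ ^ 2 ≤
      (1 - ‖f w‖ ^ 2) * (1 - ‖f z‖ ^ 2) / ‖1 - conj (f w) * f z‖ ^ 2 := by
  have hw' : ‖w‖ < 1 := mem_ball_zero_iff.mp hw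
  have hfw : ‖f w‖ < 1 := mem_ball_zero_iff.mp (hmaps hw)
  rw [← one_sub_sq_norm_diskAut (one_sub_conj_mul_ne_zero hw' (mem_ball_zero_iff.mp hz).le),
    ← one_sub_sq_norm_diskAut (one_sub_conj_mul_ne_zero hfw (mem_ball_zero_iff.mp (hmaps hz)).le)]
  gcongr
  exact norm_diskAut_le_of_mapsTo_ball hf hmaps hz hw

theorem one_sub_sq_norm_one_sub_ofReal_mul (t : ℝ) (v : ℂ) :
    1 - ‖1 - t * v‖ ^ 2 = t * (2 * v.re - t * ‖v‖ ^ 2) := by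
  simp only [Complex.sq_norm, normSq_apply, sub_re, sub_im, mul_re, mul_im, one_re, one_im,
    ofReal_re, ofReal_im]
  ring

theorem norm_one_sub_pos {z : ℂ} (hz : ‖z‖ < 1) : 0 < ‖1 - z‖ := by
  refine norm_pos_iff.mpr (sub_ne_zero.mpr ?_)
  rintro rfl
  simp at hz

theorem tendsto_sq_norm_one_sub_conj_mul {α : Type*} {l : Filter α} {w : α → ℂ}
    (hw : Tendsto w l (𝓝 1)) (ζ : ℂ) :
    Tendsto (fun x ↦ ‖1 - conj (w x) * ζ‖ ^ 2) l (𝓝 (‖1 - ζ‖ ^ 2)) := by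
  simpa using (((continuous_conj.tendsto 1).comp hw).mul_const ζ |>.const_sub 1 |>.norm.pow 2)

section Julia

variable {f : ℂ → ℂ} {c : ℂ}

theorem HasDerivAt.tendsto_one_sub_div_one_sub (hder : HasDerivAt f c 1) (hfix : f 1 = 1) :
    Tendsto (fun r : ℝ ↦ (1 - f r) / (1 - r)) (𝓝[<] 1) (𝓝 c) := by
  have hslope := hasDerivAt_iff_tendsto_slope.mp (hder.comp_ofReal (z := 1))
  refine (hslope.mono_left (nhdsLT_le_nhdsNE 1)).congr fun r ↦ ?_
  rw [slope_def_module, Complex.real_smul]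
  push_cast
  rw [hfix, ← neg_div_neg_eq, neg_sub, neg_sub, div_eq_inv_mul]

theorem HasDerivAt.tendsto_one_sub_sq_norm_div (hder : HasDerivAt f c 1) (hfix : f 1 = 1) :
    Tendsto (fun r : ℝ ↦ (1 - ‖f r‖ ^ 2) / (1 - r ^ 2)) (𝓝[<] 1) (𝓝 c.re) := by
  set u := fun r : ℝ ↦ (1 - f r) / (1 - r)
  have hu : Tendsto u (𝓝[<] 1) (𝓝 c) := hder.tendsto_one_sub_div_one_sub hfix
  have hid : Tendsto (fun r : ℝ ↦ r) (𝓝[<] 1) (𝓝 1) :=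
    tendsto_nhdsWithin_of_tendsto_nhds tendsto_id
  have hlim : Tendsto (fun r ↦ (2 * (u r).re - (1 - r) * ‖u r‖ ^ 2) / (1 + r)) (𝓝[<] 1)
      (𝓝 ((2 * c.re - (1 - 1) * ‖c‖ ^ 2) / (1 + 1))) :=
    (((continuous_re.tendsto c).comp hu).const_mul 2 |>.sub
      ((hid.const_sub 1).mul ((continuous_norm.tendsto c).comp hu |>.pow 2))).div
      (hid.const_add 1) (by norm_num)
  rw [show (2 * c.re - (1 - 1) * ‖c‖ ^ 2) / (1 + 1) = c.re by ring] at hlim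
  refine hlim.congr' ?_
  filter_upwards [self_mem_nhdsWithin] with r (hr : r < 1)
  have hr' : 1 - r ≠ 0 := sub_ne_zero.mpr hr.ne'
  have hfr : f r = 1 - ((1 - r : ℝ) : ℂ) * u r := by
    push_cast
    rw [mul_div_cancel₀ _ (by exact_mod_cast hr')]
    ring
  rw [hfr, one_sub_sq_norm_one_sub_ofReal_mul, show 1 - r ^ 2 = (1 - r) * (1 + r) by ring,
    mul_div_mul_left _ _ hr']

theorem julia_inequality (hf : DifferentiableOn ℂ f (ball 0 1))
    (hmaps : MapsTo f (ball 0 1) (ball 0 1)) (hder : HasDerivAt f c 1) (hfix : f 1 = 1)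
    {z : ℂ} (hz : z ∈ ball 0 1) :
    (1 - ‖z‖ ^ 2) / ‖1 - z‖ ^ 2 ≤ c.re * ((1 - ‖f z‖ ^ 2) / ‖1 - f z‖ ^ 2) := by
  have hofReal : Tendsto (fun r : ℝ ↦ (r : ℂ)) (𝓝[<] 1) (𝓝 1) := by
    simpa using (continuous_ofReal.tendsto 1).mono_left nhdsWithin_le_nhds
  have hfr : Tendsto (fun r : ℝ ↦ f r) (𝓝[<] 1) (𝓝 1) :=
    hfix ▸ hder.continuousAt.tendsto.comp hofReal
  have hL := tendsto_const_nhds (x := 1 - ‖z‖ ^ 2) |>.div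
    (tendsto_sq_norm_one_sub_conj_mul hofReal z)
    (pow_pos (norm_one_sub_pos (mem_ball_zero_iff.mp hz)) 2).ne'
  have hR := (hder.tendsto_one_sub_sq_norm_div hfix).mul <|
    tendsto_const_nhds (x := 1 - ‖f z‖ ^ 2) |>.div (tendsto_sq_norm_one_sub_conj_mul hfr (f z))
      (pow_pos (norm_one_sub_pos (mem_ball_zero_iff.mp (hmaps hz))) 2).ne'
  refine le_of_tendsto_of_tendsto hL hR ?_
  filter_upwards [Ioo_mem_nhdsLT zero_lt_one] with r ⟨hr₀, hr₁⟩
  have hr : (r : ℂ) ∈ ball 0 1 := by simpa [abs_of_pos hr₀] using hr₁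
  have hpick := schwarz_pick hf hmaps hz hr
  rw [norm_real, Real.norm_of_nonneg hr₀.le, mul_div_assoc, mul_div_assoc] at hpick
  rw [div_mul_eq_mul_div, le_div_iff₀ (by nlinarith), mul_comm]
  exact hpick

theorem julia_re_pos (hf : DifferentiableOn ℂ f (ball 0 1))
    (hmaps : MapsTo f (ball 0 1) (ball 0 1)) (hder : HasDerivAt f c 1) (hfix : f 1 = 1) :
    0 < c.re := by
  have hjulia := julia_inequality hf hmaps hder hfix (mem_ball_self one_pos)
  have hf0 : ‖f 0‖ < 1 := mem_ball_zero_iff.mp (hmaps (mem_ball_self one_pos))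
  norm_num at hjulia
  have hP : 0 < (1 - ‖f 0‖ ^ 2) / ‖1 - f 0‖ ^ 2 :=
    div_pos (by nlinarith [norm_nonneg (f 0)]) (pow_pos (norm_one_sub_pos hf0) 2)
  exact pos_of_mul_pos_left (by linarith) hP.le

theorem julia_im_eq_zero (hf : DifferentiableOn ℂ f (ball 0 1))
    (hmaps : MapsTo f (ball 0 1) (ball 0 1)) (hder : HasDerivAt f c 1) (hfix : f 1 = 1) :
    c.im = 0 := by
  have hle : ∀ᶠ r : ℝ in 𝓝[<] 1,
      ‖(1 - f r) / (1 - r)‖ ^ 2 ≤ c.re * ((1 - ‖f r‖ ^ 2) / (1 - r ^ 2)) := by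
    filter_upwards [Ioo_mem_nhdsLT zero_lt_one] with r ⟨hr₀, hr₁⟩
    have hr : (r : ℂ) ∈ ball 0 1 := by simpa [abs_of_pos hr₀] using hr₁
    have h1r : ‖1 - (r : ℂ)‖ = 1 - r := by
      rw [← ofReal_one, ← ofReal_sub, norm_real, Real.norm_of_nonneg (by linarith)]
    have hjulia := julia_inequality hf hmaps hder hfix hr
    rw [norm_real, Real.norm_of_nonneg hr₀.le, h1r] at hjulia
    have hfr := norm_one_sub_pos (mem_ball_zero_iff.mp (hmaps hr))
    have hr2 : 0 < 1 - r ^ 2 := by nlinarith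
    have hr3 : 0 < 1 - r := by linarith
    rw [norm_div, h1r, div_pow]
    calc ‖1 - f r‖ ^ 2 / (1 - r) ^ 2
        = (1 - r ^ 2) / (1 - r) ^ 2 * (‖1 - f r‖ ^ 2 / (1 - r ^ 2)) := by field_simp
      _ ≤ c.re * ((1 - ‖f r‖ ^ 2) / ‖1 - f r‖ ^ 2) * (‖1 - f r‖ ^ 2 / (1 - r ^ 2)) := by
        gcongr
      _ = c.re * ((1 - ‖f r‖ ^ 2) / (1 - r ^ 2)) := by field_simp
  have hsq : ‖c‖ ^ 2 ≤ c.re * c.re :=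
    le_of_tendsto_of_tendsto ((hder.tendsto_one_sub_div_one_sub hfix).norm.pow 2)
      ((hder.tendsto_one_sub_sq_norm_div hfix).const_mul c.re) hle
  rw [Complex.sq_norm, normSq_apply] at hsq
  exact mul_self_eq_zero.mp (le_antisymm (by linarith) (mul_self_nonneg _))

end Julia

theorem julia_inequality_disk_general
    (U : Set ℂ) (hU : IsOpen U) (hUD : ball (0 : ℂ) 1 ⊆ U) (h1U : (1 : ℂ) ∈ U)
    (f : ℂ → ℂ) (hf : DifferentiableOn ℂ f U)
    (hmap : ∀ z ∈ ball (0 : ℂ) 1, ‖f z‖ < 1)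
    (hfix : f 1 = 1) :
    (deriv f 1).im = 0 ∧ 0 < (deriv f 1).re ∧
      ∀ z ∈ ball (0 : ℂ) 1,
        (deriv f 1).re * (1 - ‖f z‖ ^ 2) / ‖1 - f z‖ ^ 2 ≥
          (1 - ‖z‖ ^ 2) / ‖1 - z‖ ^ 2 := by
  have hdisk : DifferentiableOn ℂ f (ball 0 1) := hf.mono hUD
  have hmaps : MapsTo f (ball 0 1) (ball 0 1) := fun z hz ↦ mem_ball_zero_iff.mpr (hmap z hz)
  have hder : HasDerivAt f (deriv f 1) 1 := (hf.differentiableAt (hU.mem_nhds h1U)).hasDerivAt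
  refine ⟨julia_im_eq_zero hdisk hmaps hder hfix, julia_re_pos hdisk hmaps hder hfix,
    fun z hz ↦ ?_⟩
  rw [ge_iff_le, mul_div_assoc]
  exact julia_inequality hdisk hmaps hder hfix hz

/-- Julia's inequality in the unit disk, for a boundary fixed point at `1`. -/
theorem julia_inequality_disk
    (U : Set ℂ) (hU : IsOpen U) (hUD : ball (0 : ℂ) 1 ⊆ U) (h1U : (1 : ℂ) ∈ U)
    (f : ℂ → ℂ) (hf : DifferentiableOn ℂ f U)
    (hmap : ∀ z ∈ ball (0 : ℂ) 1, ‖f z‖ < 1)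
    (hfix : f 1 = 1)
    (hnc : ¬ ∃ w : ℂ, ∀ z ∈ ball (0 : ℂ) 1, f z = w) :
    (deriv f 1).im = 0 ∧ 0 < (deriv f 1).re ∧
      ∀ z ∈ ball (0 : ℂ) 1,
        (deriv f 1).re * (1 - ‖f z‖ ^ 2) / ‖1 - f z‖ ^ 2 ≥
          (1 - ‖z‖ ^ 2) / ‖1 - z‖ ^ 2 :=
  julia_inequality_disk_general U hU hUD h1U f hf hmap hfix
end

section
/- (Unkelbach's refinement) Let f be holomorphic on an open set containing the open unit disk 𝔻 and the point 1, with |f(z)| < 1 for all z ∈ 𝔻, f(0) = 0, f(1) = 1, and f not constant. Then f'(1) is a real number and f'(1) ≥ 2/(1 + |f'(0)|). -/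
/-!
Write `f z = z g z`. Schwarz–Pick applied to `g` (through the Möbius map moving `g 0 = f'(0)` to
`0`) gives `|f r| ≤ r (r + |f'(0)|) / (1 + |f'(0)| r)` for `0 < r < 1`, so the difference quotient
`(1 - Re f r) / (1 - r)` is at least `(1 + r) / (1 + |f'(0)| r)`, which tends to
`2 / (1 + |f'(0)|)` as `r → 1`. Since `|f| ≤ 1` on the unit circle near `1` and `f 1 = 1`,
`θ ↦ |f (exp (iθ))|²` is maximal at `θ = 0`, which forces `f'(1)` to be real.
-/

open Complex ComplexConjugate Metric Filter Set Topology

lemma normSq_one_sub_conj_mul_sub_normSq_sub (a w : ℂ) :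
    normSq (1 - conj a * w) - normSq (w - a) = (1 - normSq a) * (1 - normSq w) := by
  simp only [normSq_apply, sub_re, sub_im, mul_re, mul_im, conj_re, conj_im, one_re, one_im]
  ring

lemma norm_sub_le_norm_one_sub_conj_mul {a w : ℂ} (ha : ‖a‖ ≤ 1) (hw : ‖w‖ ≤ 1) :
    ‖w - a‖ ≤ ‖1 - conj a * w‖ := by
  have key := normSq_one_sub_conj_mul_sub_normSq_sub a w
  rw [← Complex.sq_norm, ← Complex.sq_norm, ← Complex.sq_norm, ← Complex.sq_norm] at key
  have : 0 ≤ (1 - ‖a‖ ^ 2) * (1 - ‖w‖ ^ 2) := by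
    apply mul_nonneg <;> nlinarith [norm_nonneg a, norm_nonneg w]
  exact (pow_le_pow_iff_left₀ (norm_nonneg _) (norm_nonneg _) two_ne_zero).1 (by linarith)

/-- The pseudo-hyperbolic disc of radius `r` about `a` lies in the disc of radius
`(‖a‖ + r) / (1 + ‖a‖ r)` about `0`. -/
lemma norm_mul_one_add_le_of_norm_sub_le {a w : ℂ} {r : ℝ} (ha : ‖a‖ ≤ 1) (hw : ‖w‖ ≤ 1)
    (hr₀ : 0 ≤ r) (hr₁ : r ≤ 1) (h : ‖w - a‖ ≤ r * ‖1 - conj a * w‖) :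
    ‖w‖ * (1 + ‖a‖ * r) ≤ ‖a‖ + r := by
  have hs : (conj a * w).re ≤ ‖a‖ * ‖w‖ := by
    simpa only [norm_mul, norm_conj] using re_le_norm (conj a * w)
  have hsq : ‖w - a‖ ^ 2 ≤ r ^ 2 * ‖1 - conj a * w‖ ^ 2 := by
    rw [← mul_pow]; exact pow_le_pow_left₀ (norm_nonneg _) h 2
  have h₁ : ‖w - a‖ ^ 2 = ‖w‖ ^ 2 - 2 * (conj a * w).re + ‖a‖ ^ 2 := by
    simp only [Complex.sq_norm, normSq_apply, sub_re, sub_im, mul_re, conj_re, conj_im]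
    ring
  have h₂ : ‖1 - conj a * w‖ ^ 2 = 1 - 2 * (conj a * w).re + ‖a‖ ^ 2 * ‖w‖ ^ 2 := by
    simp only [Complex.sq_norm, normSq_apply, sub_re, sub_im, mul_re, mul_im, conj_re, conj_im,
      one_re, one_im]
    ring
  set m := ‖a‖
  set t := ‖w‖
  -- `hsq` and `hs` give `(t (1 + m r) - (m + r)) (t (1 - m r) - (m - r)) ≤ 0`, and the second
  -- factor exceeds the first by `2 r (1 - m t) ≥ 0`.
  have hprod : (t * (1 + m * r) - (m + r)) * (t * (1 - m * r) - (m - r)) ≤ 0 := by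
    rw [h₁, h₂] at hsq
    nlinarith [mul_le_mul_of_nonneg_left hs (by nlinarith : (0 : ℝ) ≤ 1 - r ^ 2)]
  have hmt : m * t ≤ 1 := mul_le_one₀ ha (norm_nonneg w) hw
  by_contra! hlt
  nlinarith [mul_nonneg hr₀ (sub_nonneg.2 hmt)]

/-- Schwarz–Pick, in the form `‖g z‖ ≤ (‖g 0‖ + ‖z‖) / (1 + ‖g 0‖ ‖z‖)`. -/
theorem norm_mul_one_add_le_of_mapsTo_ball {g : ℂ → ℂ} (hd : DifferentiableOn ℂ g (ball 0 1))
    (hmaps : MapsTo g (ball 0 1) (closedBall 0 1)) {z : ℂ} (hz : z ∈ ball 0 1) :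
    ‖g z‖ * (1 + ‖g 0‖ * ‖z‖) ≤ ‖g 0‖ + ‖z‖ := by
  set a := g 0
  have hbound : ∀ w ∈ ball (0 : ℂ) 1, ‖g w‖ ≤ 1 := fun w hw ↦ mem_closedBall_zero_iff.1 (hmaps hw)
  have hw := hbound z hz
  have hz' : ‖z‖ < 1 := mem_ball_zero_iff.1 hz
  rcases (hbound 0 (mem_ball_self one_pos)).eq_or_lt with ha | ha
  · rw [ha]; nlinarith [norm_nonneg z]
  have hden : ∀ w ∈ ball (0 : ℂ) 1, 1 - conj a * g w ≠ 0 := by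
    intro w hw h
    have : ‖conj a * g w‖ < 1 := by
      rw [norm_mul, norm_conj]
      exact mul_lt_one_of_nonneg_of_lt_one_left (norm_nonneg _) ha (hbound w hw)
    rw [← sub_eq_zero.1 h, norm_one] at this
    exact this.false
  -- the Möbius map `w ↦ (w - a) / (1 - ā w)` sends `a` to `0` and the closed disc into itself
  set φ : ℂ → ℂ := fun w ↦ (g w - a) / (1 - conj a * g w)
  have hφd : DifferentiableOn ℂ φ (ball 0 1) :=
    (hd.sub_const a).div ((differentiableOn_const 1).sub (hd.const_mul _)) hden
  have hφmaps : MapsTo φ (ball 0 1) (closedBall 0 1) := by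
    intro w hw
    rw [mem_closedBall_zero_iff, norm_div, div_le_one (norm_pos_iff.2 (hden w hw))]
    exact norm_sub_le_norm_one_sub_conj_mul ha.le (hbound w hw)
  have hschwarz := norm_le_norm_of_mapsTo_ball hφd hφmaps (by simp [φ, a]) hz'
  rw [norm_div, div_le_iff₀ (norm_pos_iff.2 (hden z hz))] at hschwarz
  exact norm_mul_one_add_le_of_norm_sub_le ha.le hw (norm_nonneg z) hz'.le hschwarz

theorem norm_mul_one_add_le_of_mapsTo_ball_of_map_zero {f : ℂ → ℂ}
    (hd : DifferentiableOn ℂ f (ball 0 1)) (hmaps : MapsTo f (ball 0 1) (closedBall 0 1))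
    (h₀ : f 0 = 0) {z : ℂ} (hz : z ∈ ball 0 1) :
    ‖f z‖ * (1 + ‖deriv f 0‖ * ‖z‖) ≤ ‖z‖ * (‖deriv f 0‖ + ‖z‖) := by
  have hg : DifferentiableOn ℂ (dslope f 0) (ball 0 1) :=
    (differentiableOn_dslope (ball_mem_nhds 0 one_pos)).2 hd
  have hgmaps : MapsTo (dslope f 0) (ball 0 1) (closedBall 0 1) := by
    intro w hw
    simpa using norm_dslope_le_div_of_mapsTo_ball hd (by rwa [h₀]) hw
  have hfz : f z = z * dslope f 0 z := by simpa [h₀] using (sub_smul_dslope f 0 z).symm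
  rw [hfz, norm_mul, ← dslope_same, mul_assoc]
  exact mul_le_mul_of_nonneg_left (norm_mul_one_add_le_of_mapsTo_ball hg hgmaps hz) (norm_nonneg z)

theorem le_of_hasDerivAt_of_le_slope {h φ : ℝ → ℝ} {h' c x : ℝ} (hh : HasDerivAt h h' x)
    (hφ : Tendsto φ (𝓝[<] x) (𝓝 c)) (hle : ∀ᶠ r in 𝓝[<] x, φ r ≤ slope h x r) : c ≤ h' :=
  le_of_tendsto_of_tendsto hφ
    ((hasDerivWithinAt_iff_tendsto_slope' self_notMem_Iio).1 hh.hasDerivWithinAt) hle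

theorem two_div_le_re_of_hasDerivAt_one {f : ℂ → ℂ} {f' : ℂ}
    (hd : DifferentiableOn ℂ f (ball 0 1)) (hmaps : MapsTo f (ball 0 1) (closedBall 0 1))
    (h₀ : f 0 = 0) (h₁ : f 1 = 1) (hf' : HasDerivAt f f' 1) :
    2 / (1 + ‖deriv f 0‖) ≤ f'.re := by
  set m := ‖deriv f 0‖
  have hm : 0 ≤ m := norm_nonneg _
  refine le_of_hasDerivAt_of_le_slope (φ := fun r ↦ (1 + r) / (1 + m * r))
    (by simpa using hf'.real_of_complex) ?_ ?_
  · have : ContinuousAt (fun r : ℝ ↦ (1 + r) / (1 + m * r)) 1 :=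
      ContinuousAt.div (by fun_prop) (by fun_prop) (by positivity)
    simpa [one_add_one_eq_two] using this.tendsto.mono_left nhdsWithin_le_nhds
  · filter_upwards [Ioo_mem_nhdsLT one_pos] with r ⟨hr₀, hr₁⟩
    have hrb : (r : ℂ) ∈ ball 0 1 := by simpa [abs_of_pos hr₀] using hr₁
    have hbound := norm_mul_one_add_le_of_mapsTo_ball_of_map_zero hd hmaps h₀ hrb
    rw [norm_real, Real.norm_of_nonneg hr₀.le] at hbound
    have hre : (f r).re ≤ ‖f r‖ := re_le_norm _
    rw [slope_comm, slope_def_field, div_le_div_iff₀ (by positivity) (by linarith)]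
    simp only [ofReal_one, h₁, one_re]
    nlinarith [mul_le_mul_of_nonneg_right hre (by positivity : (0 : ℝ) ≤ 1 + m * r)]

theorem im_deriv_eq_zero_of_eventually_norm_le_one {f : ℂ → ℂ} (hf : DifferentiableAt ℂ f 1)
    (h₁ : f 1 = 1) (hle : ∀ᶠ z in 𝓝[sphere 0 1] 1, ‖f z‖ ≤ 1) : (deriv f 1).im = 0 := by
  set γ : ℝ → ℂ := fun θ ↦ exp (θ * I)
  have hγ₀ : γ 0 = 1 := by simp [γ]
  have hγ : HasDerivAt γ I 0 := by
    simpa [γ] using ((hasDerivAt_id (0 : ℝ)).ofReal_comp.mul_const I).cexp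
  have hγ_tendsto : Tendsto γ (𝓝 0) (𝓝[sphere 0 1] 1) :=
    tendsto_nhdsWithin_iff.2 ⟨hγ₀ ▸ hγ.continuousAt.tendsto,
      .of_forall fun θ ↦ by simp [γ, norm_exp_ofReal_mul_I]⟩
  -- `θ ↦ ‖f (exp (θ I))‖²` is maximal at `θ = 0`, where its derivative is `-2 Im f'(1)`
  have hmax : IsLocalMax (fun θ ↦ ‖f (γ θ)‖ ^ 2) 0 := by
    filter_upwards [hγ_tendsto.eventually hle] with θ hθ
    simpa [hγ₀, h₁] using hθ
  have hF : HasDerivAt (f ∘ γ) (deriv f 1 * I) 0 := hf.hasDerivAt.comp_of_eq 0 hγ hγ₀.symm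
  simpa [hγ₀, h₁, real_inner_eq_re_inner] using hmax.hasDerivAt_eq_zero hF.norm_sq

theorem unkelbach_refinement_general
    (U : Set ℂ) (hU : IsOpen U) (hUD : ball (0 : ℂ) 1 ⊆ U) (h1U : (1 : ℂ) ∈ U)
    (f : ℂ → ℂ) (hf : DifferentiableOn ℂ f U)
    (hmap : ∀ z ∈ ball (0 : ℂ) 1, ‖f z‖ < 1)
    (hfix0 : f 0 = 0) (hfix1 : f 1 = 1) :
    (deriv f 1).im = 0 ∧
      (deriv f 1).re ≥ 2 / (1 + ‖deriv f 0‖) := by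
  have hmaps : MapsTo f (ball 0 1) (closedBall 0 1) :=
    fun z hz ↦ mem_closedBall_zero_iff.2 (hmap z hz).le
  have hf₁ : DifferentiableAt ℂ f 1 := hf.differentiableAt (hU.mem_nhds h1U)
  have hcircle : ∀ᶠ z in 𝓝[sphere 0 1] 1, ‖f z‖ ≤ 1 := by
    filter_upwards [nhdsWithin_le_nhds (hU.mem_nhds h1U), self_mem_nhdsWithin] with z hzU hz
    have hzc : z ∈ closure (ball (0 : ℂ) 1) := by
      rw [closure_ball 0 one_ne_zero]; exact sphere_subset_closedBall hz
    have hfz := (hf.continuousOn.continuousAt (hU.mem_nhds hzU)).continuousWithinAt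
      |>.mem_closure_image hzc
    simpa using closure_minimal hmaps.image_subset isClosed_closedBall hfz
  exact ⟨im_deriv_eq_zero_of_eventually_norm_le_one hf₁ hfix1 hcircle,
    two_div_le_re_of_hasDerivAt_one (hf.mono hUD) hmaps hfix0 hfix1 hf₁.hasDerivAt⟩

/-- Unkelbach's refinement of the boundary Schwarz lemma. -/
theorem unkelbach_refinement
    (U : Set ℂ) (hU : IsOpen U) (hUD : ball (0 : ℂ) 1 ⊆ U) (h1U : (1 : ℂ) ∈ U)
    (f : ℂ → ℂ) (hf : DifferentiableOn ℂ f U)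
    (hmap : ∀ z ∈ ball (0 : ℂ) 1, ‖f z‖ < 1)
    (hfix0 : f 0 = 0) (hfix1 : f 1 = 1)
    (hnc : ¬ ∃ w : ℂ, ∀ z ∈ ball (0 : ℂ) 1, f z = w) :
    (deriv f 1).im = 0 ∧
      (deriv f 1).re ≥ 2 / (1 + ‖deriv f 0‖) :=
  unkelbach_refinement_general U hU hUD h1U f hf hmap hfix0 hfix1
end

section
/- (Wolff's monotonicity) Let f be holomorphic on the upper half-plane ℍ with f(z) ∈ ℍ for all z ∈ ℍ. Then for each fixed real x, the function y ↦ Im(f(x + i·y))/y is monotonically nonincreasing in y on (0, ∞); equivalently, if 0 < y₁ ≤ y₂ then Im(f(x + i·y₁))/y₁ ≥ Im(f(x + i·y₂))/y₂. -/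
/-!
Schwarz–Pick on the upper half-plane: conjugating `f` by the Möbius maps
`z ↦ (z - w) / (z - conj w)`, which send `ℍ` onto the unit disk and `w` to `0`, the Schwarz lemma
shows that `f` does not increase the pseudo-hyperbolic distance `‖z - w‖ / ‖z - conj w‖`.
For `w = x + i y₁`, `z = x + i y₂` this distance is `(y₂ - y₁) / (y₂ + y₁)`, while for the images
it is at least `|Im f z - Im f w| / (Im f z + Im f w)`; comparing the two gives the claim.
-/

open Complex ComplexConjugate Metric Set

noncomputable def halfPlaneToDisk (w z : ℂ) : ℂ := (z - w) / (z - conj w)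

noncomputable def diskToHalfPlane (w ζ : ℂ) : ℂ := (w - conj w * ζ) / (1 - ζ)

section

variable {w z : ℂ}

lemma norm_sub_lt_norm_sub_conj (hz : 0 < z.im) (hw : 0 < w.im) :
    ‖z - w‖ < ‖z - conj w‖ := by
  rw [Complex.norm_def, Complex.norm_def, Real.sqrt_lt_sqrt_iff (normSq_nonneg _)]
  simp only [normSq_apply, sub_re, sub_im, conj_re, conj_im]
  nlinarith

lemma norm_halfPlaneToDisk_lt_one (hz : 0 < z.im) (hw : 0 < w.im) :
    ‖halfPlaneToDisk w z‖ < 1 := by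
  have hlt := norm_sub_lt_norm_sub_conj hz hw
  rw [halfPlaneToDisk, norm_div, div_lt_one ((norm_nonneg _).trans_lt hlt)]
  exact hlt

lemma halfPlaneToDisk_self : halfPlaneToDisk w w = 0 := by
  simp [halfPlaneToDisk]

lemma abs_im_sub_div_le_norm_halfPlaneToDisk (hz : 0 < z.im) (hw : 0 < w.im) :
    |z.im - w.im| / (z.im + w.im) ≤ ‖halfPlaneToDisk w z‖ := by
  have hpos : 0 < ‖z - conj w‖ :=
    (norm_nonneg _).trans_lt (norm_sub_lt_norm_sub_conj hz hw)
  rw [halfPlaneToDisk, norm_div, div_le_div_iff₀ (by linarith) hpos,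
    ← pow_le_pow_iff_left₀ (by positivity) (by positivity) two_ne_zero, mul_pow, mul_pow, sq_abs,
    Complex.sq_norm, Complex.sq_norm]
  simp only [normSq_apply, sub_re, sub_im, conj_re, conj_im]
  nlinarith [mul_nonneg (mul_pos hz hw).le (sq_nonneg (z.re - w.re))]

lemma norm_halfPlaneToDisk_vertical (x y₁ y₂ : ℝ) :
    ‖halfPlaneToDisk (x + y₁ * I) (x + y₂ * I)‖ = |y₂ - y₁| / |y₂ + y₁| := by
  have hnum : (x + y₂ * I : ℂ) - (x + y₁ * I) = ((y₂ - y₁ : ℝ) : ℂ) * I := by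
    push_cast; ring
  have hden : (x + y₂ * I : ℂ) - conj (x + y₁ * I) = ((y₂ + y₁ : ℝ) : ℂ) * I := by
    simp only [map_add, map_mul, conj_ofReal, conj_I]
    push_cast; ring
  rw [halfPlaneToDisk, hnum, hden, norm_div, norm_mul, norm_mul, norm_I, norm_real, norm_real,
    Real.norm_eq_abs, Real.norm_eq_abs, mul_one, mul_one]

lemma im_diskToHalfPlane_pos (hw : 0 < w.im) {ζ : ℂ} (hζ : ‖ζ‖ < 1) :
    0 < (diskToHalfPlane w ζ).im := by
  have hne : 1 - ζ ≠ 0 := sub_ne_zero.mpr fun h => by simp [← h] at hζ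
  have hζ' : ζ.re ^ 2 + ζ.im ^ 2 < 1 := by
    have := Complex.sq_norm ζ
    rw [normSq_apply] at this
    nlinarith [norm_nonneg ζ]
  rw [diskToHalfPlane, div_im, div_sub_div_same]
  apply div_pos _ (normSq_pos.mpr hne)
  simp only [sub_re, sub_im, mul_re, mul_im, conj_re, conj_im, one_re, one_im]
  nlinarith

lemma diskToHalfPlane_zero : diskToHalfPlane w 0 = w := by
  simp [diskToHalfPlane]

lemma diskToHalfPlane_halfPlaneToDisk (hz : 0 < z.im) (hw : 0 < w.im) :
    diskToHalfPlane w (halfPlaneToDisk w z) = z := by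
  have hwne : w - conj w ≠ 0 := fun h => by
    simpa [hw.ne'] using congrArg Complex.im h
  have hzne : z - conj w ≠ 0 := fun h => by
    have := congrArg Complex.im h
    simp only [sub_im, conj_im, zero_im] at this
    linarith
  have hone : 1 - halfPlaneToDisk w z = (w - conj w) / (z - conj w) := by
    rw [halfPlaneToDisk]; field_simp; ring
  rw [diskToHalfPlane, hone, div_eq_iff (div_ne_zero hwne hzne), halfPlaneToDisk]
  field_simp
  ring

lemma differentiableOn_diskToHalfPlane : DifferentiableOn ℂ (diskToHalfPlane w) (ball 0 1) := by
  refine DifferentiableOn.div (by fun_prop) (by fun_prop) fun ζ hζ => sub_ne_zero.mpr fun h => ?_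
  simp [← h] at hζ

lemma differentiableOn_halfPlaneToDisk (hw : 0 < w.im) :
    DifferentiableOn ℂ (halfPlaneToDisk w) {z | 0 < z.im} := by
  refine DifferentiableOn.div (by fun_prop) (by fun_prop) fun z (hz : 0 < z.im) h => ?_
  have := congrArg Complex.im h
  simp only [sub_im, conj_im, zero_im] at this
  linarith

end

lemma norm_halfPlaneToDisk_map_le {f : ℂ → ℂ} (hf : DifferentiableOn ℂ f {z : ℂ | 0 < z.im})
    (hmap : ∀ z : ℂ, 0 < z.im → 0 < (f z).im) {w z : ℂ} (hz : 0 < z.im) (hw : 0 < w.im) :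
    ‖halfPlaneToDisk (f w) (f z)‖ ≤ ‖halfPlaneToDisk w z‖ := by
  set g := halfPlaneToDisk (f w) ∘ f ∘ diskToHalfPlane w
  have hball : MapsTo (diskToHalfPlane w) (ball 0 1) {z | 0 < z.im} := fun ζ hζ =>
    im_diskToHalfPlane_pos hw (mem_ball_zero_iff.mp hζ)
  have hg : DifferentiableOn ℂ g (ball 0 1) :=
    (differentiableOn_halfPlaneToDisk (hmap w hw)).comp
      (hf.comp differentiableOn_diskToHalfPlane hball) fun ζ hζ => hmap _ (hball hζ)
  have hgmaps : MapsTo g (ball 0 1) (closedBall 0 1) := fun ζ hζ =>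
    mem_closedBall_zero_iff.mpr (norm_halfPlaneToDisk_lt_one (hmap _ (hball hζ)) (hmap w hw)).le
  have hg0 : g 0 = 0 := by
    simp only [g, Function.comp_apply, diskToHalfPlane_zero, halfPlaneToDisk_self]
  simpa [g, diskToHalfPlane_halfPlaneToDisk hz hw] using
    Complex.norm_le_norm_of_mapsTo_ball hg hgmaps hg0 (norm_halfPlaneToDisk_lt_one hz hw)

lemma div_le_div_of_sub_div_add_le {a b s t : ℝ} (ha : 0 < a) (hb : 0 < b) (hs : 0 < s)
    (ht : 0 < t) (h : (a - b) / (a + b) ≤ (t - s) / (t + s)) : a / t ≤ b / s := by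
  rw [div_le_div_iff₀ (by positivity) (by positivity)] at h
  rw [div_le_div_iff₀ ht hs]
  linarith

/-- Wolff's monotonicity: for a holomorphic self-map of the upper half-plane,
`Im f(x + iy) / y` is nonincreasing in `y`. -/
theorem wolff_monotonicity
    (f : ℂ → ℂ) (hf : DifferentiableOn ℂ f {z : ℂ | 0 < z.im})
    (hmap : ∀ z : ℂ, 0 < z.im → 0 < (f z).im) :
    ∀ x y₁ y₂ : ℝ, 0 < y₁ → y₁ ≤ y₂ →
      (f ((x : ℂ) + (y₂ : ℂ) * Complex.I)).im / y₂ ≤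
        (f ((x : ℂ) + (y₁ : ℂ) * Complex.I)).im / y₁ := by
  intro x y₁ y₂ hy₁ h12
  have hw : 0 < ((x : ℂ) + y₁ * I).im := by simpa using hy₁
  have hz : 0 < ((x : ℂ) + y₂ * I).im := by simpa using hy₁.trans_le h12
  have hschwarz := norm_halfPlaneToDisk_map_le hf hmap hz hw
  rw [norm_halfPlaneToDisk_vertical, abs_of_nonneg (sub_nonneg.mpr h12),
    abs_of_pos (by linarith)] at hschwarz
  refine div_le_div_of_sub_div_add_le (hmap _ hz) (hmap _ hw) hy₁ (by linarith) ?_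
  have hsum : 0 < (f (x + y₂ * I)).im + (f (x + y₁ * I)).im := add_pos (hmap _ hz) (hmap _ hw)
  exact (div_le_div_of_nonneg_right (le_abs_self _) hsum.le).trans
    ((abs_im_sub_div_le_norm_halfPlaneToDisk (hmap _ hz) (hmap _ hw)).trans hschwarz)
end
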